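/- arXiv:2207.01378 — 6 statements merged into one kernel-verified Lean document; each statement's English description precedes it below -/
import Mathlib

section
/- Let n ≥ 1. The set N_n of tame natural d-paths in [0,1]^n is convex: if γ and γ' are tame natural d-paths and u ∈ [0,1], then the pointwise convex combination (1-u)γ + uγ' is again a tame natural d-path. -/
/-! All defining conditions except the vertex condition on the endpoints are preserved by
convex combinations. That one is rigid: since the coordinates lie in `[0,1]` and sum to `t`,
every tame natural d-path starts at `0` and ends at `(1,…,1)`, and so does every convex
combination of two of them. -/

open Set

/-- A tame natural d-path of the topological `n`-cube `[0,1]^n`: a continuous map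
`γ : [0,n] → [0,1]^n`, nondecreasing in each coordinate, whose endpoints are
vertices, and such that the sum of the coordinates of `γ t` equals `t`. -/
def IsNatPath (n : ℕ) (γ : ℝ → Fin n → ℝ) : Prop :=
  ContinuousOn γ (Icc 0 n) ∧
  (∀ t ∈ Icc (0:ℝ) n, ∀ i, γ t i ∈ Icc (0:ℝ) 1) ∧
  (∀ s ∈ Icc (0:ℝ) n, ∀ t ∈ Icc (0:ℝ) n, s ≤ t → ∀ i, γ s i ≤ γ t i) ∧
  (∀ i, γ 0 i = 0 ∨ γ 0 i = 1) ∧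
  (∀ i, γ (n:ℝ) i = 0 ∨ γ (n:ℝ) i = 1) ∧
  (∀ t ∈ Icc (0:ℝ) n, ∑ i, γ t i = t)

namespace IsNatPath

variable {n : ℕ} {γ : ℝ → Fin n → ℝ}

lemma apply_zero (h : IsNatPath n γ) (i : Fin n) : γ 0 i = 0 := by
  obtain ⟨-, hmem, -, -, -, hsum⟩ := h
  have h0 : (0 : ℝ) ∈ Icc (0 : ℝ) n := ⟨le_rfl, Nat.cast_nonneg n⟩
  have hle : ∀ j ∈ Finset.univ, (0 : ℝ) ≤ γ 0 j := fun j _ => (hmem 0 h0 j).1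
  have hsum_eq : ∑ _j : Fin n, (0 : ℝ) = ∑ j, γ 0 j := by simp [hsum 0 h0]
  exact ((Finset.sum_eq_sum_iff_of_le hle).1 hsum_eq i (Finset.mem_univ i)).symm

lemma apply_natCast (h : IsNatPath n γ) (i : Fin n) : γ n i = 1 := by
  obtain ⟨-, hmem, -, -, -, hsum⟩ := h
  have hn : (n : ℝ) ∈ Icc (0 : ℝ) n := ⟨Nat.cast_nonneg n, le_rfl⟩
  have hle : ∀ j ∈ Finset.univ, γ n j ≤ 1 := fun j _ => (hmem n hn j).2
  have hsum_eq : ∑ j, γ n j = ∑ _j : Fin n, (1 : ℝ) := by simp [hsum n hn]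
  exact (Finset.sum_eq_sum_iff_of_le hle).1 hsum_eq i (Finset.mem_univ i)

end IsNatPath

theorem natPath_convex_general (n : ℕ) (γ γ' : ℝ → Fin n → ℝ)
    (hγ : IsNatPath n γ) (hγ' : IsNatPath n γ') (u : ℝ) (hu : u ∈ Icc (0:ℝ) 1) :
    IsNatPath n (fun t i => (1 - u) * γ t i + u * γ' t i) := by
  have hu0 : 0 ≤ 1 - u := sub_nonneg.2 hu.2
  have hstart (i : Fin n) : γ 0 i = 0 ∧ γ' 0 i = 0 := ⟨hγ.apply_zero i, hγ'.apply_zero i⟩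
  have hend (i : Fin n) : γ n i = 1 ∧ γ' n i = 1 := ⟨hγ.apply_natCast i, hγ'.apply_natCast i⟩
  obtain ⟨hc, hmem, hmono, -, -, hsum⟩ := hγ
  obtain ⟨hc', hmem', hmono', -, -, hsum'⟩ := hγ'
  refine ⟨by fun_prop, ?_, ?_, ?_, ?_, ?_⟩
  · intro t ht i
    exact convex_Icc 0 1 (hmem t ht i) (hmem' t ht i) hu0 hu.1 (sub_add_cancel 1 u)
  · intro s hs t ht hst i
    exact add_le_add (mul_le_mul_of_nonneg_left (hmono s hs t ht hst i) hu0)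
      (mul_le_mul_of_nonneg_left (hmono' s hs t ht hst i) hu.1)
  · intro i
    left
    simp [hstart i]
  · intro i
    right
    simp [hend i]
  · intro t ht
    simp only [Finset.sum_add_distrib, ← Finset.mul_sum, hsum t ht, hsum' t ht]
    ring

/-- The set `N_n` of tame natural d-paths in `[0,1]^n` (for `n ≥ 1`) is convex:
any pointwise convex combination of two tame natural d-paths is again one. -/
theorem natPath_convex (n : ℕ) (hn : 1 ≤ n) (γ γ' : ℝ → Fin n → ℝ)
    (hγ : IsNatPath n γ) (hγ' : IsNatPath n γ') (u : ℝ) (hu : u ∈ Icc (0:ℝ) 1) :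
    IsNatPath n (fun t i => (1 - u) * γ t i + u * γ' t i) :=
  natPath_convex_general n γ γ' hγ hγ' u hu
end

section
/- Let n ≥ 1. The space N_n of tame natural d-paths in [0,1]^n, equipped with the topology of uniform convergence, is sequentially compact (hence compact, being metrizable). -/
open Set

/-- The space `N_n` of tame natural d-paths of `[0,1]^n`, as a subspace of the
space `C([0,n], (Fin n → ℝ))` of continuous maps equipped with the metric of
uniform convergence (the codomain carrying the sup metric): continuous maps
`γ : [0,n] → [0,1]^n`, nondecreasing in each coordinate, with endpoints in
`{0,1}^n`, whose coordinate-sum at time `t` is `t`. -/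
def NatPathSpace (n : ℕ) : Type :=
  {γ : C(Icc (0:ℝ) n, Fin n → ℝ) //
    (∀ t, ∀ i, γ t i ∈ Icc (0:ℝ) 1) ∧
    (∀ s t, s ≤ t → ∀ i, γ s i ≤ γ t i) ∧
    (∀ i, γ ⟨0, Set.mem_Icc.mpr ⟨le_refl 0, by positivity⟩⟩ i = 0 ∨
          γ ⟨0, Set.mem_Icc.mpr ⟨le_refl 0, by positivity⟩⟩ i = 1) ∧
    (∀ i, γ ⟨(n:ℝ), Set.mem_Icc.mpr ⟨by positivity, le_refl _⟩⟩ i = 0 ∨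
          γ ⟨(n:ℝ), Set.mem_Icc.mpr ⟨by positivity, le_refl _⟩⟩ i = 1) ∧
    (∀ t, ∑ i, γ t i = (t : ℝ))}

noncomputable instance (n : ℕ) : MetricSpace (NatPathSpace n) :=
  inferInstanceAs (MetricSpace {γ : C(Icc (0:ℝ) n, Fin n → ℝ) // _})

/-- Auxiliary: monotone coordinates plus coordinate-sum `t` forces 1-Lipschitz. -/
lemma natPath_lipschitz_aux {n : ℕ} (f : Icc (0:ℝ) n → Fin n → ℝ)
    (hmono : ∀ s t : Icc (0:ℝ) n, s ≤ t → ∀ i, f s i ≤ f t i)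
    (hsum : ∀ t : Icc (0:ℝ) n, ∑ i, f t i = (t : ℝ)) : LipschitzWith 1 f := by
  apply LipschitzWith.of_dist_le_mul
  have key : ∀ s t : Icc (0:ℝ) n, s ≤ t → dist (f s) (f t) ≤ dist s t := by
    intro s t h
    rw [dist_pi_le_iff dist_nonneg]
    intro i
    have h1 : f s i ≤ f t i := hmono s t h i
    have h2 : f t i - f s i ≤ (t:ℝ) - s := by
      have hs := Finset.single_le_sum (f := fun j => f t j - f s j)
        (fun j _ => sub_nonneg.2 (hmono s t h j)) (Finset.mem_univ i)
      calc f t i - f s i ≤ ∑ j, (f t j - f s j) := hs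
        _ = (t:ℝ) - s := by rw [Finset.sum_sub_distrib, hsum, hsum]
    rw [Real.dist_eq, Subtype.dist_eq, Real.dist_eq, abs_sub_comm]
    have hst : (s:ℝ) ≤ t := h
    rw [abs_of_nonneg (sub_nonneg.2 h1), abs_of_nonpos (sub_nonpos.2 hst)]
    linarith
  intro s t
  rw [NNReal.coe_one, one_mul]
  rcases le_total s t with h | h
  · exact key s t h
  · rw [dist_comm, dist_comm s t]; exact key t s h

/-- For n ≥ 1, the space N_n of tame natural d-paths in [0,1]^n, with the topology
of uniform convergence, is sequentially compact, hence compact (being metrizable). -/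
theorem natPathSpace_seqCompact (n : ℕ) (hn : 1 ≤ n) :
    SeqCompactSpace (NatPathSpace n) ∧ CompactSpace (NatPathSpace n) := by
  suffices h : CompactSpace (NatPathSpace n) by
    exact ⟨compactSpace_iff_seqCompactSpace.mp h, h⟩
  set z0 : Icc (0:ℝ) n := ⟨0, Set.mem_Icc.mpr ⟨le_refl 0, by positivity⟩⟩ with hz0
  set z1 : Icc (0:ℝ) n := ⟨(n:ℝ), Set.mem_Icc.mpr ⟨by positivity, le_refl _⟩⟩ with hz1
  set P : Set C(Icc (0:ℝ) n, Fin n → ℝ) := {γ |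
    (∀ t, ∀ i, γ t i ∈ Icc (0:ℝ) 1) ∧
    (∀ s t, s ≤ t → ∀ i, γ s i ≤ γ t i) ∧
    (∀ i, γ z0 i = 0 ∨ γ z0 i = 1) ∧
    (∀ i, γ z1 i = 0 ∨ γ z1 i = 1) ∧
    (∀ t, ∑ i, γ t i = (t : ℝ))} with hP
  set Q : Set (Icc (0:ℝ) n → Fin n → ℝ) := {f |
    (∀ t, ∀ i, f t i ∈ Icc (0:ℝ) 1) ∧
    (∀ s t, s ≤ t → ∀ i, f s i ≤ f t i) ∧
    (∀ i, f z0 i = 0 ∨ f z0 i = 1) ∧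
    (∀ i, f z1 i = 0 ∨ f z1 i = 1) ∧
    (∀ t, ∑ i, f t i = (t : ℝ))} with hQ
  have ceval : ∀ (t : Icc (0:ℝ) n) (i : Fin n),
      Continuous fun f : Icc (0:ℝ) n → Fin n → ℝ => f t i :=
    fun t i => (continuous_apply i).comp (continuous_apply t)
  have himg : ContinuousMap.toFun '' P = Q := by
    apply subset_antisymm
    · rintro f ⟨γ, hγ, rfl⟩
      exact hγ
    · rintro f hf
      have lip := natPath_lipschitz_aux f hf.2.1 hf.2.2.2.2
      exact ⟨ContinuousMap.mk f lip.continuous, hf, rfl⟩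
  have hQclosed : IsClosed Q := by
    rw [hQ]
    simp only [setOf_and]
    refine IsClosed.inter ?_ (IsClosed.inter ?_ (IsClosed.inter ?_ (IsClosed.inter ?_ ?_)))
    · simp only [setOf_forall]
      exact isClosed_iInter fun t => isClosed_iInter fun i =>
        isClosed_Icc.preimage (ceval t i)
    · simp only [setOf_forall]
      exact isClosed_iInter fun s => isClosed_iInter fun t => isClosed_iInter fun _ =>
        isClosed_iInter fun i => isClosed_le (ceval s i) (ceval t i)
    · simp only [setOf_forall, setOf_or]
      exact isClosed_iInter fun i => IsClosed.union
        (isClosed_eq (ceval z0 i) continuous_const)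
        (isClosed_eq (ceval z0 i) continuous_const)
    · simp only [setOf_forall, setOf_or]
      exact isClosed_iInter fun i => IsClosed.union
        (isClosed_eq (ceval z1 i) continuous_const)
        (isClosed_eq (ceval z1 i) continuous_const)
    · simp only [setOf_forall]
      exact isClosed_iInter fun t => isClosed_eq
        (continuous_finset_sum _ fun i _ => ceval t i)
        continuous_const
  have hQcompact : IsCompact Q := by
    refine IsCompact.of_isClosed_subset
      (isCompact_univ_pi fun _ => isCompact_univ_pi fun _ => (isCompact_Icc : IsCompact (Icc (0:ℝ) 1))) hQclosed ?_
    intro f hf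
    exact Set.mem_univ_pi.mpr fun t => Set.mem_univ_pi.mpr fun i => hf.1 t i
  have hPcompact : IsCompact P := by
    apply ArzelaAscoli.isCompact_of_equicontinuous
    · rw [himg]; exact hQcompact
    · apply Metric.equicontinuous_of_continuity_modulus id Filter.tendsto_id
      intro x y γ
      have lip := natPath_lipschitz_aux γ.1 γ.2.2.1 γ.2.2.2.2.2
      simpa using lip.dist_le_mul x y
  rw [isCompact_iff_compactSpace] at hPcompact
  exact hPcompact
end

section
/- Let n ≥ 2 and let γ be a tame natural d-path in [0,1]^n passing at time t_0 through a vertex v = (ε_1,…,ε_n) ∈ {0,1}^n with v ∉ {(0,…,0),(1,…,1)}. Let J = {j : ε_j = 0}. Then for all t ∈ [0,t_0] and all j ∈ J, γ_j(t) = 0, and for all t ∈ [t_0,n] and all i ∉ J, γ_i(t) = 1. Consequently γ restricted to [0,t_0] is a tame natural d-path of the subcube spanned by the coordinates not in J, and γ restricted to [t_0,n] (reparametrized to start at 0) is a tame natural d-path of the subcube spanned by the coordinates in J. -/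
/-! Coordinates are monotone and confined to `[0,1]`, so a coordinate that is `0` at the vertex
was `0` all along before `t₀`, and one that is `1` there stays `1` afterwards. Naturality
then computes the sums over the remaining coordinates. -/

open Set

namespace IsNatPath

variable {n : ℕ} {γ : ℝ → Fin n → ℝ} {s t : ℝ}

theorem mem_Icc (hγ : IsNatPath n γ) (ht : t ∈ Icc (0:ℝ) n) (i : Fin n) : γ t i ∈ Icc (0:ℝ) 1 :=
  hγ.2.1 t ht i

theorem mono (hγ : IsNatPath n γ) (hs : s ∈ Icc (0:ℝ) n) (ht : t ∈ Icc (0:ℝ) n) (hst : s ≤ t)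
    (i : Fin n) : γ s i ≤ γ t i :=
  hγ.2.2.1 s hs t ht hst i

theorem sum_eq (hγ : IsNatPath n γ) (ht : t ∈ Icc (0:ℝ) n) : ∑ i, γ t i = t :=
  hγ.2.2.2.2.2 t ht

theorem eq_zero_of_le (hγ : IsNatPath n γ) (hs : s ∈ Icc (0:ℝ) n) (ht : t ∈ Icc (0:ℝ) n)
    (hst : s ≤ t) {i : Fin n} (h : γ t i = 0) : γ s i = 0 :=
  le_antisymm (h ▸ hγ.mono hs ht hst i) (hγ.mem_Icc hs i).1

theorem eq_one_of_le (hγ : IsNatPath n γ) (hs : s ∈ Icc (0:ℝ) n) (ht : t ∈ Icc (0:ℝ) n)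
    (hst : s ≤ t) {i : Fin n} (h : γ s i = 1) : γ t i = 1 :=
  le_antisymm (hγ.mem_Icc ht i).2 (h ▸ hγ.mono hs ht hst i)

theorem sum_filter_eq (hγ : IsNatPath n γ) (ht : t ∈ Icc (0:ℝ) n) {p : Fin n → Prop}
    [DecidablePred p] (h : ∀ i, ¬ p i → γ t i = 0) : ∑ i with p i, γ t i = t := by
  rw [Finset.sum_filter_of_ne fun i _ hi => by_contra fun hp => hi (h i hp), hγ.sum_eq ht]

theorem sum_filter_sub_eq (hγ : IsNatPath n γ) (hs : s ∈ Icc (0:ℝ) n) (ht : t ∈ Icc (0:ℝ) n)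
    {p : Fin n → Prop} [DecidablePred p] (h : ∀ i, ¬ p i → γ s i = γ t i) :
    ∑ i with p i, (γ t i - γ s i) = t - s := by
  rw [Finset.sum_filter_of_ne fun i _ hi => by_contra fun hp => hi (by rw [h i hp, sub_self]),
    Finset.sum_sub_distrib, hγ.sum_eq ht, hγ.sum_eq hs]

end IsNatPath

theorem natPath_through_vertex_splits_general (n : ℕ) (γ : ℝ → Fin n → ℝ)
    (hγ : IsNatPath n γ) (t₀ : ℝ) (ht₀ : t₀ ∈ Icc (0:ℝ) n) (v : Fin n → Bool)
    (hv : ∀ i, γ t₀ i = if v i then 1 else 0) :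
    (∀ t ∈ Icc (0:ℝ) t₀, ∀ j, v j = false → γ t j = 0) ∧
    (∀ t ∈ Icc t₀ (n:ℝ), ∀ i, v i = true → γ t i = 1) ∧
    (∀ t ∈ Icc (0:ℝ) t₀, ∑ i ∈ Finset.univ.filter (fun i => v i = true), γ t i = t) ∧
    (∀ t ∈ Icc t₀ (n:ℝ), ∑ j ∈ Finset.univ.filter (fun j => v j = false), γ t j = t - t₀) := by
  have hv_false : ∀ j, v j = false → γ t₀ j = 0 := fun j hj => by simp [hv j, hj]
  have hv_true : ∀ i, v i = true → γ t₀ i = 1 := fun i hi => by simp [hv i, hi]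
  have before : ∀ t ∈ Icc (0:ℝ) t₀, t ∈ Icc (0:ℝ) n := fun t ht => ⟨ht.1, ht.2.trans ht₀.2⟩
  have after : ∀ t ∈ Icc t₀ (n:ℝ), t ∈ Icc (0:ℝ) n := fun t ht => ⟨ht₀.1.trans ht.1, ht.2⟩
  have hzero : ∀ t ∈ Icc (0:ℝ) t₀, ∀ j, v j = false → γ t j = 0 := fun t ht j hj =>
    hγ.eq_zero_of_le (before t ht) ht₀ ht.2 (hv_false j hj)
  have hone : ∀ t ∈ Icc t₀ (n:ℝ), ∀ i, v i = true → γ t i = 1 := fun t ht i hi =>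
    hγ.eq_one_of_le ht₀ (after t ht) ht.1 (hv_true i hi)
  refine ⟨hzero, hone, fun t ht => hγ.sum_filter_eq (before t ht) fun i hi =>
    hzero t ht i (by simpa using hi), fun t ht => ?_⟩
  calc ∑ j with v j = false, γ t j = ∑ j with v j = false, (γ t j - γ t₀ j) :=
        Finset.sum_congr rfl fun j hj => by rw [hv_false j (Finset.mem_filter.1 hj).2, sub_zero]
    _ = t - t₀ := hγ.sum_filter_sub_eq ht₀ (after t ht) fun i hi => by
        rw [hv_true i (by simpa using hi), hone t ht i (by simpa using hi)]

/-- A tame natural d-path in [0,1]^n (n ≥ 2) through an intermediate vertex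
v = (ε₁,…,εₙ) at time t₀ splits: before t₀ the coordinates in J = {j : εⱼ = 0}
stay at 0 and the restriction to [0,t₀] is a tame natural d-path of the subcube
spanned by the coordinates not in J (naturality: the sum over i ∉ J of γᵢ(t) is t);
after t₀ the coordinates not in J stay at 1 and the (reparametrized) restriction
to [t₀,n] is a tame natural d-path of the subcube spanned by J
(naturality: the sum over j ∈ J of γⱼ(t) is t − t₀). -/
theorem natPath_through_vertex_splits (n : ℕ) (hn : 2 ≤ n) (γ : ℝ → Fin n → ℝ)
    (hγ : IsNatPath n γ) (t₀ : ℝ) (ht₀ : t₀ ∈ Icc (0:ℝ) n) (v : Fin n → Bool)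
    (hv : ∀ i, γ t₀ i = if v i then 1 else 0)
    (hv0 : v ≠ fun _ => false) (hv1 : v ≠ fun _ => true) :
    (∀ t ∈ Icc (0:ℝ) t₀, ∀ j, v j = false → γ t j = 0) ∧
    (∀ t ∈ Icc t₀ (n:ℝ), ∀ i, v i = true → γ t i = 1) ∧
    (∀ t ∈ Icc (0:ℝ) t₀, ∑ i ∈ Finset.univ.filter (fun i => v i = true), γ t i = t) ∧
    (∀ t ∈ Icc t₀ (n:ℝ), ∑ j ∈ Finset.univ.filter (fun j => v j = false), γ t j = t - t₀) :=
  natPath_through_vertex_splits_general n γ hγ t₀ ht₀ v hv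
end

section
/- Let n ≥ 2. For every γ ∈ ∂N_n (the set of tame natural d-paths in [0,1]^n whose image meets {0,1}^n \ {0_n, 1_n}), the image γ([0,n]) is contained in the topological boundary of [0,1]^n, i.e. for every t some coordinate of γ(t) lies in {0,1}. -/
open Set

namespace IsNatPath

variable {n : ℕ} {γ : ℝ → Fin n → ℝ} {s t : ℝ} {i : Fin n}

theorem coord_eq_zero_of_le (hγ : IsNatPath n γ) (hs : s ∈ Icc (0:ℝ) n)
    (ht : t ∈ Icc (0:ℝ) n) (hst : s ≤ t) (h : γ t i = 0) : γ s i = 0 :=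
  le_antisymm (h ▸ hγ.2.2.1 s hs t ht hst i) (hγ.2.1 s hs i).1

theorem coord_eq_one_of_le (hγ : IsNatPath n γ) (hs : s ∈ Icc (0:ℝ) n)
    (ht : t ∈ Icc (0:ℝ) n) (hst : s ≤ t) (h : γ s i = 1) : γ t i = 1 :=
  le_antisymm (hγ.2.1 t ht i).2 (h ▸ hγ.2.2.1 s hs t ht hst i)

end IsNatPath

theorem natPath_boundary_image_general (n : ℕ) (γ : ℝ → Fin n → ℝ)
    (hγ : IsNatPath n γ)
    (hmeet : ∃ t₀ ∈ Icc (0:ℝ) n, (∀ i, γ t₀ i = 0 ∨ γ t₀ i = 1) ∧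
      ¬ (∀ i, γ t₀ i = 0) ∧ ¬ (∀ i, γ t₀ i = 1)) :
    ∀ t ∈ Icc (0:ℝ) n, ∃ i, γ t i = 0 ∨ γ t i = 1 := by
  obtain ⟨t₀, ht₀, hvertex, hne0, hne1⟩ := hmeet
  push Not at hne0 hne1
  obtain ⟨i, hi⟩ := hne0
  obtain ⟨j, hj⟩ := hne1
  intro t ht
  rcases le_total t t₀ with hle | hge
  · exact ⟨j, .inl (hγ.coord_eq_zero_of_le ht ht₀ hle ((hvertex j).resolve_right hj))⟩
  · exact ⟨i, .inr (hγ.coord_eq_one_of_le ht₀ ht hge ((hvertex i).resolve_left hi))⟩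

/-- If a tame natural d-path in [0,1]^n (n ≥ 2) passes through a vertex other than
(0,…,0) and (1,…,1), then its image is contained in the topological boundary of
[0,1]^n: at every time some coordinate is 0 or 1. -/
theorem natPath_boundary_image (n : ℕ) (hn : 2 ≤ n) (γ : ℝ → Fin n → ℝ)
    (hγ : IsNatPath n γ)
    (hmeet : ∃ t₀ ∈ Icc (0:ℝ) n, (∀ i, γ t₀ i = 0 ∨ γ t₀ i = 1) ∧
      ¬ (∀ i, γ t₀ i = 0) ∧ ¬ (∀ i, γ t₀ i = 1)) :
    ∀ t ∈ Icc (0:ℝ) n, ∃ i, γ t i = 0 ∨ γ t i = 1 :=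
  natPath_boundary_image_general n γ hγ hmeet
end

section
/- Let (f_k : [0,n] → [0,1]^n) be a sequence of maps that are nondecreasing in each coordinate, and suppose that for every rational r ∈ [0,n] the sequence (f_k(r)) converges, the limits satisfying that the coordinate-wise left supremum function sup{lim_k f_k(r) : r ∈ ℚ ∩ [0,x]} and right infimum function inf{lim_k f_k(r) : r ∈ ℚ ∩ [x,n]} agree whenever the sum of the coordinate gaps vanishes. If additionally each f_k satisfies (f_k)_1(t)+⋯+(f_k)_n(t) = t for all t, then (f_k) converges pointwise to a continuous limit and the convergence is uniform. -/
open Set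

/-- Dini-type compactness step: if `f_k : [0,n] → [0,1]^n` are nondecreasing in
each coordinate, satisfy the naturality condition `Σᵢ (f_k)ᵢ(t) = t`, and
converge pointwise at every rational point of `[0,n]`, then they converge
pointwise on all of `[0,n]` to a continuous limit, and by Dini's second theorem
the convergence is uniform. -/
theorem dini_type_convergence (n : ℕ) (hn : 1 ≤ n)
    (f : ℕ → ℝ → Fin n → ℝ)
    (hrange : ∀ k, ∀ t ∈ Icc (0:ℝ) n, ∀ i, f k t i ∈ Icc (0:ℝ) 1)
    (hmono : ∀ k, ∀ s ∈ Icc (0:ℝ) n, ∀ t ∈ Icc (0:ℝ) n, s ≤ t →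
      ∀ i, f k s i ≤ f k t i)
    (hsum : ∀ k, ∀ t ∈ Icc (0:ℝ) n, ∑ i, f k t i = t)
    (hconv : ∀ r : ℚ, (r : ℝ) ∈ Icc (0:ℝ) n →
      ∃ L : Fin n → ℝ, Filter.Tendsto (fun k => f k (r : ℝ)) Filter.atTop (nhds L)) :
    ∃ g : ℝ → Fin n → ℝ,
      ContinuousOn g (Icc (0:ℝ) n) ∧
      (∀ t ∈ Icc (0:ℝ) n, Filter.Tendsto (fun k => f k t) Filter.atTop (nhds (g t))) ∧
      TendstoUniformlyOn f g Filter.atTop (Icc (0:ℝ) n) := by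
  -- Step 1: each coordinate of `f k` is 1-Lipschitz on `[0,n]`.
  have key : ∀ k, ∀ s ∈ Icc (0:ℝ) n, ∀ t ∈ Icc (0:ℝ) n, s ≤ t →
      ∀ i, f k t i - f k s i ≤ t - s := by
    intro k s hs t ht hst i
    have h1 : ∀ j, 0 ≤ f k t j - f k s j := fun j => sub_nonneg.2 (hmono k s hs t ht hst j)
    have h2 : f k t i - f k s i ≤ ∑ j, (f k t j - f k s j) :=
      Finset.single_le_sum (fun j _ => h1 j) (Finset.mem_univ i)
    simpa [Finset.sum_sub_distrib, hsum k s hs, hsum k t ht] using h2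
  have lip : ∀ k, ∀ s ∈ Icc (0:ℝ) n, ∀ t ∈ Icc (0:ℝ) n, ∀ i,
      |f k t i - f k s i| ≤ |t - s| := by
    intro k s hs t ht i
    rcases le_total s t with h | h
    · rw [abs_of_nonneg (sub_nonneg.2 (hmono k s hs t ht h i)),
        abs_of_nonneg (sub_nonneg.2 h)]
      exact key k s hs t ht h i
    · rw [abs_sub_comm, abs_sub_comm t s,
        abs_of_nonneg (sub_nonneg.2 (hmono k t ht s hs h i)),
        abs_of_nonneg (sub_nonneg.2 h)]
      exact key k t ht s hs h i
  have lipd : ∀ k, ∀ s ∈ Icc (0:ℝ) n, ∀ t ∈ Icc (0:ℝ) n,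
      dist (f k t) (f k s) ≤ dist t s := by
    intro k s hs t ht
    rw [dist_pi_le_iff dist_nonneg]
    intro i
    rw [Real.dist_eq, Real.dist_eq]
    exact lip k s hs t ht i
  -- Step 2: uniform Cauchy on `[0,n]` via a rational grid.
  have hucauchy : UniformCauchySeqOn f Filter.atTop (Icc (0:ℝ) n) := by
    rw [Metric.uniformCauchySeqOn_iff]
    intro ε hε
    obtain ⟨M, hM⟩ := exists_nat_gt (4 / ε)
    have hM0 : 0 < (M : ℝ) := lt_trans (by positivity) hM
    have hinv : 1 / (M : ℝ) < ε / 4 := by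
      rw [div_lt_div_iff₀ hM0 (by norm_num)]
      have := (div_lt_iff₀ hε).mp hM
      linarith
    have hqmem : ∀ j : ℕ, j ≤ n * M → ((j : ℝ) / M) ∈ Icc (0:ℝ) n := by
      intro j hj
      constructor
      · positivity
      · rw [div_le_iff₀ hM0]
        calc ((j : ℝ)) ≤ ((n * M : ℕ) : ℝ) := by exact_mod_cast hj
          _ = (n : ℝ) * M := by push_cast; ring
    have hNj : ∀ j : ℕ, ∃ N, ∀ m ≥ N, ∀ m' ≥ N, j ≤ n * M →
        dist (f m ((j : ℝ) / M)) (f m' ((j : ℝ) / M)) < ε / 2 := by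
      intro j
      by_cases hj : j ≤ n * M
      · obtain ⟨L, hL⟩ := hconv ((j : ℚ) / M) (by push_cast; exact hqmem j hj)
        have hcs : CauchySeq (fun k => f k (((j : ℚ) / M : ℚ) : ℝ)) := hL.cauchySeq
        rw [Metric.cauchySeq_iff] at hcs
        obtain ⟨N, hN⟩ := hcs (ε / 2) (by positivity)
        refine ⟨N, fun m hm m' hm' _ => ?_⟩
        have := hN m hm m' hm'
        have hcast : (((j : ℚ) / M : ℚ) : ℝ) = (j : ℝ) / M := by push_cast; ring
        rwa [hcast] at this
      · exact ⟨0, fun _ _ _ _ h => absurd h hj⟩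
    choose N hN using hNj
    refine ⟨(Finset.range (n * M + 1)).sup N, fun m hm m' hm' t ht => ?_⟩
    set j : ℕ := (⌊t * M⌋).toNat with hjdef
    have ht0 : 0 ≤ t * M := mul_nonneg ht.1 hM0.le
    have hjcast : (j : ℝ) = (⌊t * M⌋ : ℝ) := by
      rw [hjdef]
      exact_mod_cast congrArg (fun z : ℤ => (z : ℝ)) (Int.toNat_of_nonneg (Int.floor_nonneg.2 ht0))
    have hjle : (j : ℝ) ≤ t * M := by rw [hjcast]; exact Int.floor_le _
    have hjgt : t * M < (j : ℝ) + 1 := by rw [hjcast]; exact Int.lt_floor_add_one _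
    have hjbound : j ≤ n * M := by
      have : (j : ℝ) ≤ (n : ℝ) * M := le_trans hjle (by
        exact mul_le_mul_of_nonneg_right ht.2 hM0.le)
      exact_mod_cast (by push_cast; linarith : (j : ℝ) ≤ ((n * M : ℕ) : ℝ))
    have hqIcc : ((j : ℝ) / M) ∈ Icc (0:ℝ) n := hqmem j hjbound
    have hclose : dist t ((j : ℝ) / M) < ε / 4 := by
      rw [Real.dist_eq, abs_of_nonneg (by
        rw [sub_nonneg, div_le_iff₀ hM0]; exact hjle)]
      have : t - (j : ℝ) / M < 1 / M := by
        rw [sub_lt_iff_lt_add, ← add_div, lt_div_iff₀ hM0]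
        linarith
      linarith
    have hNle : N j ≤ (Finset.range (n * M + 1)).sup N :=
      Finset.le_sup (Finset.mem_range.2 (Nat.lt_succ_of_le hjbound))
    have hmid : dist (f m ((j : ℝ) / M)) (f m' ((j : ℝ) / M)) < ε / 2 :=
      hN j m (le_trans hNle hm) m' (le_trans hNle hm') hjbound
    calc dist (f m t) (f m' t)
        ≤ dist (f m t) (f m ((j : ℝ) / M)) + dist (f m ((j : ℝ) / M)) (f m' ((j : ℝ) / M))
            + dist (f m' ((j : ℝ) / M)) (f m' t) := dist_triangle4 _ _ _ _
      _ < ε / 4 + ε / 2 + ε / 4 := by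
          have h1 : dist (f m t) (f m ((j : ℝ) / M)) ≤ dist t ((j : ℝ) / M) := by
            have := lipd m ((j : ℝ) / M) hqIcc t ht
            simpa using this
          have h2 : dist (f m' ((j : ℝ) / M)) (f m' t) ≤ dist t ((j : ℝ) / M) := by
            have := lipd m' t ht ((j : ℝ) / M) hqIcc
            simpa [dist_comm] using this
          linarith
      _ = ε := by ring
  -- Step 3: pointwise limit exists by completeness.
  have hcs : ∀ t ∈ Icc (0:ℝ) n, CauchySeq (fun k => f k t) := by
    intro t ht
    rw [Metric.cauchySeq_iff]
    rw [Metric.uniformCauchySeqOn_iff] at hucauchy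
    intro ε hε
    obtain ⟨N, hN⟩ := hucauchy ε hε
    exact ⟨N, fun m hm m' hm' => hN m hm m' hm' t ht⟩
  have hlim : ∀ t ∈ Icc (0:ℝ) n, ∃ L, Filter.Tendsto (fun k => f k t) Filter.atTop (nhds L) :=
    fun t ht => cauchySeq_tendsto_of_complete (hcs t ht)
  classical
  choose! g hg using hlim
  refine ⟨g, ?_, hg, ?_⟩
  · -- continuity from uniform convergence of continuous functions
    have hunif : TendstoUniformlyOn f g Filter.atTop (Icc (0:ℝ) n) :=
      hucauchy.tendstoUniformlyOn_of_tendsto hg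
    refine hunif.continuousOn (Filter.Eventually.frequently (Filter.Eventually.of_forall fun k => ?_))
    refine continuousOn_pi.2 fun i => ?_
    have : LipschitzOnWith 1 (fun t => f k t i) (Icc (0:ℝ) n) := by
      apply LipschitzOnWith.of_dist_le_mul
      intro x hx y hy
      rw [NNReal.coe_one, one_mul, Real.dist_eq, Real.dist_eq]
      exact lip k y hy x hx i
    exact this.continuousOn
  · exact hucauchy.tendstoUniformlyOn_of_tendsto hg
end

section
/- Every metrizable locally path-connected topological space is Δ-generated. -/
open Set unitInterval

/-- A topological space is Δ-generated when its topology is final with respect to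
continuous maps from the interval `[0,1]`: a subset is open as soon as all its
preimages under continuous maps `[0,1] → X` are open. -/
def IsDeltaGen (X : Type*) [TopologicalSpace X] : Prop :=
  ∀ O : Set X, (∀ g : C(unitInterval, X), IsOpen (g ⁻¹' O)) → IsOpen O

namespace DeltaGenAux

noncomputable section

open Filter Topology

/-- The affine embedding of `[0,1]` onto the second half `[1/2,1]`. -/
def σI : I → I := fun u => ⟨(1 + u) / 2, by
  constructor
  · nlinarith [u.2.1]
  · nlinarith [u.2.2]⟩

lemma σI_coe (u : I) : ((σI u : I) : ℝ) = (1 + u) / 2 := rfl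

lemma σI_iter_coe : ∀ (n : ℕ) (u : I), ((σI^[n] u : I) : ℝ) = 1 - (1 - u) / 2 ^ n := by
  intro n
  induction n with
  | zero => intro u; simp
  | succ n ih =>
    intro u
    rw [Function.iterate_succ_apply', σI_coe, ih]
    rw [pow_succ]
    ring

/-- The point `1/4` of the unit interval. -/
def q4 : I := ⟨1 / 4, by norm_num⟩

/-- Evaluating a concatenated path in the second half. -/
lemma trans_σI {X : Type*} [TopologicalSpace X] {a b c : X} (p : Path a b) (q : Path b c)
    (u : I) : (p.trans q) (σI u) = q u := by
  rw [Path.trans_apply]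
  split_ifs with h
  · -- then `(1+u)/2 ≤ 1/2`, so `u = 0`
    have hu : (u : ℝ) = 0 := le_antisymm (by rw [σI_coe] at h; linarith) u.2.1
    have hu0 : u = 0 := Subtype.ext hu
    rw [← Path.extend_apply]
    have e1 : 2 * ((σI u : I) : ℝ) = 1 := by rw [σI_coe, hu]; norm_num
    rw [e1, Path.extend_one, hu0, q.source]
  · congr 1
    apply Subtype.ext
    show 2 * ((σI u : I) : ℝ) - 1 = u
    rw [σI_coe]; ring

/-- Evaluating a concatenated path at `1/4`. -/
lemma trans_q4 {X : Type*} [TopologicalSpace X] {a b c : X} (p : Path a b) (q : Path b c) :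
    (p.trans q) q4 = p ⟨1 / 2, by norm_num⟩ := by
  have hq : ((q4 : I) : ℝ) = 1 / 4 := rfl
  rw [Path.trans_apply]
  split_ifs with h
  · rw [← Path.extend_apply, ← Path.extend_apply, hq]
    norm_num
  · exact absurd (by rw [hq]; norm_num) h

/-- The loop `γ.trans γ.symm` passes through `γ 1` at time `1/2`. -/
lemma trans_symm_half {X : Type*} [TopologicalSpace X] {a b : X} (γ : Path a b) :
    (γ.trans γ.symm) ⟨1 / 2, by norm_num⟩ = b := by
  rw [Path.trans_apply]
  split_ifs with h
  · rw [← Path.extend_apply]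
    have e1 : 2 * ((⟨1 / 2, by norm_num⟩ : I) : ℝ) = 1 := by norm_num
    rw [e1, Path.extend_one]
  · exact absurd (by norm_num) h

variable {X : Type*} [MetricSpace X] {x : X}

/-- `Q L m k` is the concatenation of the loops `L k, L (k+1), …, L (k+m-1)`,
with `L (k+i)` traversed on the interval `[1 - 2⁻ⁱ, 1 - 2⁻ⁱ⁻¹]`, followed by
the constant loop. -/
def Q (L : ℕ → Path x x) : ℕ → ℕ → Path x x
  | 0, _ => Path.refl x
  | m + 1, k => (L k).trans (Q L m (k + 1))

lemma Q_zero (L : ℕ → Path x x) (k : ℕ) : Q L 0 k = Path.refl x := rfl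

lemma Q_succ (L : ℕ → Path x x) (m k : ℕ) :
    Q L (m + 1) k = (L k).trans (Q L m (k + 1)) := rfl

lemma Q_dist_succ (L : ℕ → Path x x) (hL : ∀ n t, dist (L n t) x ≤ (1/2 : ℝ) ^ n) :
    ∀ (m k : ℕ) (t : I), dist (Q L (m + 1) k t) (Q L m k t) ≤ (1/2 : ℝ) ^ (k + m) := by
  intro m
  induction m with
  | zero =>
    intro k t
    rw [Q_succ L 0 k]
    simp only [Q_zero, Path.trans_apply, Path.refl_apply]
    split_ifs with h
    · simpa using hL k _
    · rw [dist_self]; positivity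
  | succ m ih =>
    intro k t
    rw [Q_succ L (m + 1) k, Q_succ L m k, Path.trans_apply, Path.trans_apply]
    split_ifs with h
    · rw [dist_self]; positivity
    · calc dist (Q L (m + 1) (k + 1) _) (Q L m (k + 1) _) ≤ (1/2 : ℝ) ^ (k + 1 + m) :=
            ih (k + 1) _
        _ = (1/2 : ℝ) ^ (k + (m + 1)) := by rw [show k + 1 + m = k + (m + 1) by omega]

lemma Q_dist (L : ℕ → Path x x) (hL : ∀ n t, dist (L n t) x ≤ (1/2 : ℝ) ^ n) :
    ∀ (m n k : ℕ) (t : I), dist (Q L (n + m) k t) (Q L n k t) ≤ 2 * (1/2 : ℝ) ^ (k + n) := by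
  have key : ∀ (m n k : ℕ) (t : I),
      dist (Q L (n + m) k t) (Q L n k t) ≤ 2 * (1/2 : ℝ) ^ (k + n) - 2 * (1/2 : ℝ) ^ (k + n + m) := by
    intro m
    induction m with
    | zero => intro n k t; simp
    | succ m ih =>
      intro n k t
      have h1 := Q_dist_succ L hL (n + m) k t
      have h2 := ih n k t
      have e1 : (1/2 : ℝ) ^ (k + (n + m)) = (1/2 : ℝ) ^ (k + n + m) := by
        rw [show k + (n + m) = k + n + m by omega]
      have e2 : (1/2 : ℝ) ^ (k + n + (m + 1)) = (1/2 : ℝ) ^ (k + n + m) * (1/2) := by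
        rw [show k + n + (m + 1) = (k + n + m) + 1 by omega, pow_succ]
      rw [e1] at h1
      calc dist (Q L (n + (m + 1)) k t) (Q L n k t)
          ≤ dist (Q L (n + (m + 1)) k t) (Q L (n + m) k t) + dist (Q L (n + m) k t) (Q L n k t) :=
            dist_triangle _ _ _
        _ ≤ (1/2 : ℝ) ^ (k + n + m) + (2 * (1/2 : ℝ) ^ (k + n) - 2 * (1/2 : ℝ) ^ (k + n + m)) := by
            exact add_le_add (by rw [show n + (m + 1) = n + m + 1 by omega]; exact h1) h2
        _ = 2 * (1/2 : ℝ) ^ (k + n) - 2 * (1/2 : ℝ) ^ (k + n + (m + 1)) := by rw [e2]; ring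
  intro m n k t
  have := key m n k t
  have hpos : (0:ℝ) ≤ 2 * (1/2 : ℝ) ^ (k + n + m) := by positivity
  linarith

lemma Q_σI (L : ℕ → Path x x) (m k : ℕ) (u : I) :
    Q L (m + 1) k (σI u) = Q L m (k + 1) u := by
  rw [Q_succ]; exact trans_σI _ _ u

lemma Q_iter (L : ℕ → Path x x) :
    ∀ (n m k : ℕ) (u : I), Q L (n + m) k (σI^[n] u) = Q L m (k + n) u := by
  intro n
  induction n with
  | zero => intro m k u; simp
  | succ n ih =>
    intro m k u
    rw [Function.iterate_succ_apply']
    have e : n + 1 + m = (n + m) + 1 := by omega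
    rw [e, Q_σI L (n + m) k, ih m (k + 1) u, show k + 1 + n = k + (n + 1) by omega]

lemma Q_settle (L : ℕ → Path x x) :
    ∀ (m k : ℕ) (t : I), (t : ℝ) ≤ 1 - (1/2 : ℝ) ^ m → Q L (m + 1) k t = Q L m k t := by
  intro m
  induction m with
  | zero =>
    intro k t ht
    have ht0 : t = 0 := Subtype.ext (le_antisymm (by simpa using ht) t.2.1)
    rw [ht0, (Q L 1 k).source, (Q L 0 k).source]
  | succ m ih =>
    intro k t ht
    rw [Q_succ L (m + 1) k, Q_succ L m k, Path.trans_apply, Path.trans_apply]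
    split_ifs with h
    · rfl
    · apply ih
      show 2 * (t : ℝ) - 1 ≤ 1 - (1/2 : ℝ) ^ m
      have : (1/2 : ℝ) ^ (m + 1) = (1/2 : ℝ) ^ m * (1/2) := pow_succ _ _
      linarith

lemma Q_stable (L : ℕ → Path x x) (m : ℕ) (t : I) (ht : (t : ℝ) ≤ 1 - (1/2 : ℝ) ^ m) :
    ∀ n ≥ m, Q L n 0 t = Q L m 0 t := by
  intro n hn
  induction n, hn using Nat.le_induction with
  | base => rfl
  | succ n hn ihn =>
    rw [← ihn]
    apply Q_settle
    have : (1/2 : ℝ) ^ n ≤ (1/2 : ℝ) ^ m :=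
      pow_le_pow_of_le_one (by norm_num) (by norm_num) hn
    linarith

end

end DeltaGenAux

/-- Every metrizable locally path-connected topological space is Δ-generated. -/
theorem isDeltaGen_of_metrizable_locPathConnected
    (X : Type*) [TopologicalSpace X] [TopologicalSpace.MetrizableSpace X]
    [LocallyPathConnectedSpace X] :
    IsDeltaGen X := by
  classical
  open DeltaGenAux Filter Topology in
  intro O hO
  by_contra hopen
  letI : MetricSpace X := TopologicalSpace.metrizableSpaceMetric X
  rw [isOpen_iff_mem_nhds] at hopen
  push_neg at hopen
  obtain ⟨x, hxO, hxnhds⟩ := hopen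
  -- for each `n`, a point `y n ∉ O` joined to `x` by a path staying `(1/2)^n`-close to `x`
  have key : ∀ n : ℕ, ∃ (y : X) (γ : Path x y), y ∉ O ∧ ∀ t, dist (γ t) x ≤ (1/2 : ℝ) ^ n := by
    intro n
    have hball : Metric.ball x ((1/2 : ℝ) ^ n) ∈ 𝓝 x := Metric.ball_mem_nhds x (by positivity)
    obtain ⟨s, ⟨hs, hspc⟩, hsub⟩ := (path_connected_basis x).mem_iff.mp hball
    have hxs : x ∈ s := mem_of_mem_nhds hs
    have hnot : ¬ s ⊆ O := fun hsO => hxnhds (Filter.mem_of_superset hs hsO)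
    obtain ⟨z, hzs, hzO⟩ := not_subset.mp hnot
    obtain ⟨γ, hγ⟩ := hspc.joinedIn x hxs z hzs
    refine ⟨z, γ, hzO, fun t => ?_⟩
    have := hsub (hγ t)
    rw [Metric.mem_ball] at this
    exact this.le
  choose y γ hyO hγdist using key
  set L : ℕ → Path x x := fun n => (γ n).trans (γ n).symm with hLdef
  have hL : ∀ (n : ℕ) (t : I), dist (L n t) x ≤ (1/2 : ℝ) ^ n := by
    intro n t
    show dist (((γ n).trans (γ n).symm) t) x ≤ _
    rw [Path.trans_apply]
    split_ifs with h
    · exact hγdist n _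
    · show dist ((γ n).symm _) x ≤ _
      rw [Path.symm_apply]
      exact hγdist n _
  -- the pointwise limit of the finite concatenations
  have hQone : ∀ n, Q L n 0 (1 : I) = x := fun n => (Q L n 0).target
  have hconv : ∀ t : I, ∃ c : X, Tendsto (fun n => Q L n 0 t) atTop (𝓝 c) := by
    intro t
    rcases lt_or_eq_of_le t.2.2 with hlt | heq
    · obtain ⟨m, hm⟩ := exists_pow_lt_of_lt_one (show (0:ℝ) < 1 - t by linarith)
        (show (1/2 : ℝ) < 1 by norm_num)
      exact ⟨Q L m 0 t, tendsto_atTop_of_eventually_const (Q_stable L m t (by linarith))⟩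
    · have ht1 : t = 1 := Subtype.ext heq
      refine ⟨x, ?_⟩
      have : (fun n => Q L n 0 t) = fun _ => x := funext fun n => by rw [ht1]; exact hQone n
      rw [this]
      exact tendsto_const_nhds
  choose g hg using hconv
  have hgbound : ∀ (n : ℕ) (t : I), dist (g t) (Q L n 0 t) ≤ 2 * (1/2 : ℝ) ^ n := by
    intro n t
    have h1 : Tendsto (fun m => Q L (m + n) 0 t) atTop (𝓝 (g t)) :=
      (hg t).comp (tendsto_add_atTop_nat n)
    have h2 : Tendsto (fun m => dist (Q L (m + n) 0 t) (Q L n 0 t)) atTop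
        (𝓝 (dist (g t) (Q L n 0 t))) := h1.dist tendsto_const_nhds
    refine le_of_tendsto h2 (Eventually.of_forall fun m => ?_)
    rw [add_comm m n]
    simpa using Q_dist L hL m n 0 t
  have hgcont : Continuous g := by
    have hu : TendstoUniformly (fun n (t : I) => Q L n 0 t) g atTop := by
      rw [Metric.tendstoUniformly_iff]
      intro ε hε
      have h0 : Tendsto (fun n : ℕ => 2 * (1/2 : ℝ) ^ n) atTop (𝓝 (2 * 0)) :=
        (tendsto_pow_atTop_nhds_zero_of_lt_one (by norm_num : (0:ℝ) ≤ 1/2)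
          (by norm_num : (1/2 : ℝ) < 1)).const_mul 2
      rw [mul_zero] at h0
      filter_upwards [h0.eventually (gt_mem_nhds hε)] with n hn t
      exact lt_of_le_of_lt (hgbound n t) hn
    exact hu.continuous (Eventually.of_forall fun n => (Q L n 0).continuous).frequently
  -- values of `g`
  have hg1 : g 1 = x := by
    refine tendsto_nhds_unique (hg 1) ?_
    have : (fun n => Q L n 0 (1 : I)) = fun _ => x := funext hQone
    rw [this]
    exact tendsto_const_nhds
  have hgt : ∀ n : ℕ, g (σI^[n] q4) = y n := by
    intro n
    refine tendsto_nhds_unique (hg _) (tendsto_atTop_of_eventually_const (i₀ := n + 1) ?_)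
    intro m hm
    obtain ⟨j, rfl⟩ : ∃ j, m = n + (j + 1) := ⟨m - n - 1, by omega⟩
    rw [Q_iter L n (j + 1) 0 q4, Nat.zero_add, Q_succ, trans_q4]
    show ((γ n).trans (γ n).symm) _ = y n
    exact trans_symm_half (γ n)
  -- conclusion
  have hU : IsOpen (g ⁻¹' O) := hO ⟨g, hgcont⟩
  have h1U : (1 : I) ∈ g ⁻¹' O := by
    rw [Set.mem_preimage, hg1]; exact hxO
  obtain ⟨ε, hε, hball⟩ := Metric.isOpen_iff.mp hU 1 h1U
  obtain ⟨n, hn⟩ := exists_pow_lt_of_lt_one hε (show (1/2 : ℝ) < 1 by norm_num)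
  have htn : (σI^[n] q4) ∈ Metric.ball (1 : I) ε := by
    rw [Metric.mem_ball, Subtype.dist_eq, Real.dist_eq, σI_iter_coe]
    have hq : ((q4 : I) : ℝ) = 1 / 4 := rfl
    rw [hq]
    have h2 : (0:ℝ) < 2 ^ n := by positivity
    have h3 : (1/2 : ℝ) ^ n = 1 / 2 ^ n := by rw [div_pow, one_pow]
    rw [h3] at hn
    have hone : (((1:I)) : ℝ) = 1 := rfl
    have h4 : (0:ℝ) ≤ (1 - 1/4) / 2 ^ n := by positivity
    rw [abs_of_nonpos (by rw [hone]; linarith)]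
    rw [show -(1 - (1 - 1/4) / 2 ^ n - ((1:I) : ℝ)) = (3/4) / 2 ^ n by rw [hone]; ring]
    calc (3/4 : ℝ) / 2 ^ n ≤ 1 / 2 ^ n := by gcongr; norm_num
      _ < ε := hn
  have hmem := hball htn
  rw [Set.mem_preimage, hgt n] at hmem
  exact hyO n hmem
end
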